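/- arXiv:0805.1385 — 2 statements merged into one kernel-verified Lean document; each statement's English description precedes it below -/
import Mathlib

section
/- There exists a natural number N₀ such that for all natural numbers N ≥ 10 (in fact for all N ≥ N₀, where for N below N₀ the paper verifies the claim by direct computation; one may take N₀ = 10) and all natural numbers k with 1 ≤ k and 2·k ≤ N: if log₂ C(N, k) ≤ N/2, then H(k/N) ≤ 0.8. -/
/-!
With `p = k / N`, the binomial expansion of `1 = (p + (1 - p)) ^ N` has `N + 1` terms, the largest
of which is the `k`-th, and that term equals `C(N, k) · 2 ^ (-N · H(p))`. Hence
`N · H(k / N) ≤ log₂ C(N, k) + log₂ (N + 1) ≤ N / 2 + 0.3 · N` once `N ≥ 100`.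
-/

/-- Binary entropy function `H(x) = -x log₂ x - (1-x) log₂ (1-x)`
(with the convention `0 · log₂ 0 = 0`, automatic since `Real.log 0 = 0`). -/
noncomputable def binEntropy2 (x : ℝ) : ℝ :=
  -(x * Real.logb 2 x) - (1 - x) * Real.logb 2 (1 - x)

open Finset Real

/-- `N ^ N` times the probability that a `Binomial(N, k / N)` variable equals `j`. -/
def binomialTerm (N k j : ℕ) : ℕ := N.choose j * k ^ j * (N - k) ^ (N - j)

section binomialTerm

variable {N k j : ℕ}

theorem binomialTerm_succ_mul (hj : j < N) :
    binomialTerm N k (j + 1) * ((j + 1) * (N - k)) = binomialTerm N k j * ((N - j) * k) := by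
  have hexp : N - j = N - (j + 1) + 1 := by omega
  rw [binomialTerm, binomialTerm, hexp, pow_succ, pow_succ, ← hexp]
  linear_combination (k ^ j * k * (N - k) ^ (N - (j + 1)) * (N - k)) * Nat.choose_succ_right_eq N j

theorem binomialTerm_le_succ (hk : k ≤ N) (hj : j < k) :
    binomialTerm N k j ≤ binomialTerm N k (j + 1) := by
  have hratio : (j + 1) * (N - k) ≤ (N - j) * k := by
    obtain ⟨m, rfl⟩ := Nat.exists_eq_add_of_le hk
    obtain ⟨d, rfl⟩ := Nat.exists_eq_add_of_lt hj
    simp only [Nat.add_sub_cancel_left, show j + d + 1 + m - j = d + 1 + m by omega]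
    nlinarith
  refine Nat.le_of_mul_le_mul_right ?_ (Nat.mul_pos (by omega) (by omega) : 0 < (N - j) * k)
  rw [← binomialTerm_succ_mul (by omega)]
  exact Nat.mul_le_mul_left _ hratio

theorem binomialTerm_succ_le (hkj : k ≤ j) :
    binomialTerm N k (j + 1) ≤ binomialTerm N k j := by
  rcases lt_or_ge j N with hj | hj
  · have hratio : (N - j) * k ≤ (j + 1) * (N - k) := by
      obtain ⟨d, rfl⟩ := Nat.exists_eq_add_of_le hkj
      obtain ⟨m, rfl⟩ := Nat.exists_eq_add_of_lt hj
      simp only [show k + d + m + 1 - (k + d) = m + 1 by omega,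
        show k + d + m + 1 - k = d + m + 1 by omega]
      nlinarith
    refine Nat.le_of_mul_le_mul_right ?_ (Nat.mul_pos (by omega) (by omega) : 0 < (j + 1) * (N - k))
    rw [binomialTerm_succ_mul hj]
    exact Nat.mul_le_mul_left _ hratio
  · simp [binomialTerm, Nat.choose_eq_zero_of_lt (Nat.lt_succ_of_le hj)]

theorem binomialTerm_le_binomialTerm_self (hk : k ≤ N) (j : ℕ) :
    binomialTerm N k j ≤ binomialTerm N k k := by
  rcases le_total j k with hjk | hkj
  · refine monotoneOn_of_le_add_one Set.ordConnected_Iic (fun i _ _ hi => ?_)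
      hjk Set.self_mem_Iic hjk
    exact binomialTerm_le_succ hk (Nat.lt_of_succ_le hi)
  · exact antitoneOn_of_add_one_le Set.ordConnected_Ici (fun i _ hi _ => binomialTerm_succ_le hi)
      Set.self_mem_Ici hkj hkj

theorem sum_binomialTerm (hk : k ≤ N) : ∑ j ∈ range (N + 1), binomialTerm N k j = N ^ N := by
  conv_rhs => rw [← Nat.add_sub_cancel' hk, add_pow, Nat.add_sub_cancel' hk]
  exact sum_congr rfl fun j _ => by rw [binomialTerm, Nat.cast_id]; ring

theorem pow_self_le_succ_mul_binomialTerm_self (hk : k ≤ N) :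
    N ^ N ≤ (N + 1) * binomialTerm N k k := by
  rw [← sum_binomialTerm hk]
  simpa using sum_le_card_nsmul (range (N + 1)) _ _
    fun j _ => binomialTerm_le_binomialTerm_self hk j

end binomialTerm

theorem mul_logb_div (b x : ℝ) {y : ℝ} (hy : y ≠ 0) :
    x * logb b (x / y) = x * logb b x - x * logb b y := by
  rcases eq_or_ne x 0 with rfl | hx
  · simp
  · rw [logb_div hx hy, mul_sub]

theorem add_mul_binEntropy2_div_add {x y : ℝ} (h : x + y ≠ 0) :
    (x + y) * binEntropy2 (x / (x + y)) =
      (x + y) * logb 2 (x + y) - x * logb 2 x - y * logb 2 y := by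
  have hy : 1 - x / (x + y) = y / (x + y) := by field_simp; ring
  unfold binEntropy2
  rw [hy, mul_sub, mul_neg, ← mul_assoc, ← mul_assoc, mul_div_cancel₀ _ h, mul_div_cancel₀ _ h,
    mul_logb_div _ _ h, mul_logb_div _ _ h]
  ring

theorem natCast_mul_binEntropy2_le {N k : ℕ} (hk : k ≤ N) :
    N * binEntropy2 (k / N) ≤ logb 2 (N.choose k) + logb 2 (N + 1) := by
  rcases eq_or_ne N 0 with rfl | hN0
  · simp [Nat.le_zero.mp hk]
  set m := N - k
  have hN : (N : ℝ) = k + m := by simp [m, Nat.cast_sub hk]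
  have hpos : ∀ n : ℕ, ((n : ℝ) ^ n) ≠ 0 := fun n => by exact_mod_cast Nat.pow_self_pos.ne'
  have hbound : logb 2 ((N : ℝ) ^ N) ≤ logb 2 ((N + 1) * N.choose k * k ^ k * m ^ m) := by
    refine logb_le_logb_of_le one_lt_two (by exact_mod_cast Nat.pow_self_pos) ?_
    exact_mod_cast (pow_self_le_succ_mul_binomialTerm_self hk).trans_eq
      (by unfold binomialTerm; ring)
  have hchoose : (N.choose k : ℝ) ≠ 0 := by exact_mod_cast (Nat.choose_pos hk).ne'
  have hsucc : (N + 1 : ℝ) ≠ 0 := by positivity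
  rw [logb_mul (mul_ne_zero (mul_ne_zero hsucc hchoose) (hpos k)) (hpos m),
    logb_mul (mul_ne_zero hsucc hchoose) (hpos k), logb_mul hsucc hchoose,
    logb_pow, logb_pow, logb_pow] at hbound
  rw [hN, add_mul_binEntropy2_div_add (hN ▸ Nat.cast_ne_zero.mpr hN0), ← hN]
  linarith

theorem logb_two_add_one_le {x : ℝ} (hx : 100 ≤ x) : logb 2 (x + 1) ≤ 0.3 * x := by
  have hsqrt : √(x + 1) ≤ 0.1 * x + 1 := Real.sqrt_le_iff.mpr ⟨by linarith, by nlinarith⟩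
  have hlog : log (x + 1) ≤ 0.2 * x := by
    have hlog_sqrt := log_le_sub_one_of_pos (Real.sqrt_pos.mpr (by linarith : 0 < x + 1))
    rw [log_sqrt (by linarith)] at hlog_sqrt
    linarith
  rw [logb, div_le_iff₀ (log_pos one_lt_two)]
  nlinarith [log_two_gt_d9]

/-- Intermediate entropy bound in the proof of Lemma 6: there is an `N₀`
(one may take `N₀ = 10`) such that for all `N ≥ N₀` and all `k` with
`1 ≤ k` and `2k ≤ N`, if `log₂ C(N, k) ≤ N/2` then `H(k/N) ≤ 0.8`. -/
theorem binEntropy_le_of_logb_choose_le :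
    ∃ N₀ : ℕ, ∀ N : ℕ, N₀ ≤ N → ∀ k : ℕ, 1 ≤ k → 2 * k ≤ N →
      Real.logb 2 (N.choose k : ℝ) ≤ (N : ℝ) / 2 →
      binEntropy2 ((k : ℝ) / (N : ℝ)) ≤ 0.8 := by
  refine ⟨100, fun N hN k _ h2k hlog => ?_⟩
  have hNpos : (0 : ℝ) < N := by exact_mod_cast (by omega : 0 < N)
  have hentropy := natCast_mul_binEntropy2_le (by omega : k ≤ N)
  have hlog_succ := logb_two_add_one_le (by exact_mod_cast hN : (100 : ℝ) ≤ N)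
  exact le_of_mul_le_mul_left (by linarith) hNpos
end

section
/- For all natural numbers N and r with 1 ≤ r ≤ N, one has r · ∑_{i=0}^{r} C(N, i) ≤ (N + 1) · ∑_{i=0}^{r−1} C(N, i); equivalently, the ratio of the partial sum of binomial coefficients up to r to the partial sum up to r−1 is at most (N+1)/r. -/
/-! Splitting off the top term, the claim reduces to `r · C(N, r) ≤ (N + 1 - r) · ∑_{i<r} C(N, i)`.
Since `r · C(N, r) = (N - r + 1) · C(N, r - 1)`, this follows from `C(N, r - 1) ≤ ∑_{i<r} C(N, i)`. -/

open Finset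

theorem Nat.succ_mul_choose_succ_le_mul_sum_range (N s : ℕ) :
    (s + 1) * N.choose (s + 1) ≤ (N - s) * ∑ i ∈ range (s + 1), N.choose i :=
  calc (s + 1) * N.choose (s + 1) = (N - s) * N.choose s := by
        rw [mul_comm, Nat.choose_succ_right_eq, mul_comm]
    _ ≤ (N - s) * ∑ i ∈ range (s + 1), N.choose i :=
        Nat.mul_le_mul_left _ (single_le_sum (fun _ _ => Nat.zero_le _) (self_mem_range_succ s))

theorem partial_sum_choose_ratio_le_general
    (N r : ℕ) (hrN : r ≤ N) :
    r * ∑ i ∈ Finset.range (r + 1), N.choose i ≤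
      (N + 1) * ∑ i ∈ Finset.range r, N.choose i := by
  cases r with
  | zero => simp
  | succ s =>
    set S := ∑ i ∈ range (s + 1), N.choose i
    rw [sum_range_succ, mul_add]
    calc (s + 1) * S + (s + 1) * N.choose (s + 1) ≤ (s + 1) * S + (N - s) * S :=
          Nat.add_le_add_left (Nat.succ_mul_choose_succ_le_mul_sum_range N s) _
      _ = (N + 1) * S := by rw [← add_mul]; congr 1; omega

/-- Ratio bound on consecutive partial sums of binomial coefficients
(from the proof of Theorem 12): for `1 ≤ r ≤ N`,
`r · ∑_{i=0}^{r} C(N, i) ≤ (N + 1) · ∑_{i=0}^{r-1} C(N, i)`. -/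
theorem partial_sum_choose_ratio_le
    (N r : ℕ) (hr : 1 ≤ r) (hrN : r ≤ N) :
    r * ∑ i ∈ Finset.range (r + 1), N.choose i ≤
      (N + 1) * ∑ i ∈ Finset.range r, N.choose i :=
  partial_sum_choose_ratio_le_general N r hrN
end
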